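/- arXiv:math/9905078 — 3 statements merged into one kernel-verified Lean document; each statement's English description precedes it below -/
import Mathlib

section
/- Define I₂(p_x, p_y) = f(I₁(p)) · sin( (2π / log λ) · log |L₊(p)| ) for L₊(p) ≠ 0 and I₂ = 0 when I₁(p) = 0, where f(u) = exp(-1/u²), I₁(p) = p_x² - p_x p_y - p_y², L₊(p) = p_x - ((1+√5)/2)p_y, λ = (3+√5)/2. Then I₂ is invariant under the linear map B(p_x,p_y) = (p_x - p_y, -p_x + 2p_y): I₂(B p) = I₂(p) for all p ∈ ℝ². -/
/-!
`B` preserves the quadratic form `I₁`, and since `(1, -φ)` is a left eigenvector of `B` with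
eigenvalue `φ² = λ`, it multiplies `L₊` by `λ`. This adds `log λ` to `log |L₊|`, i.e. exactly one
period `2π` to the argument of the sine.
-/

open Real goldenRatio

theorem sin_two_pi_div_log_mul_log_abs_mul {c : ℝ} (hc : log c ≠ 0) (x : ℝ) :
    sin (2 * π / log c * log |c * x|) = sin (2 * π / log c * log |x|) := by
  rcases eq_or_ne x 0 with rfl | hx
  · simp -- both sides are `sin 0`, as `log 0 = 0`
  have hc0 : |c| ≠ 0 := abs_ne_zero.2 (Real.log_ne_zero.1 hc).1
  rw [abs_mul, log_mul hc0 (abs_ne_zero.2 hx), log_abs, mul_add, div_mul_cancel₀ _ hc, add_comm,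
    sin_add_two_pi]

theorem three_add_sqrt_five_div_two : (3 + √5) / 2 = φ ^ 2 := by
  rw [goldenRatio_sq, goldenRatio]; ring

theorem log_goldenRatio_sq_ne_zero : log (φ ^ 2) ≠ 0 :=
  (log_pos (one_lt_pow₀ one_lt_goldenRatio two_ne_zero)).ne'

theorem sub_sub_goldenRatio_mul (x y : ℝ) :
    x - y - φ * (-x + 2 * y) = φ ^ 2 * (x - φ * y) := by
  linear_combination ((φ + 1) * y - x) * goldenRatio_sq

/-- The function `I₂(p) = f(I₁(p)) · sin((2π/log λ)·log |L₊(p)|)` (set to `0`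
when `I₁(p) = 0`) is invariant under `B(p) = (p_x - p_y, -p_x + 2 p_y)`. -/
theorem stmt_7 :
    let lam : ℝ := (3 + Real.sqrt 5) / 2
    let f : ℝ → ℝ := fun u => Real.exp (-1 / u ^ 2)
    let I₁ : ℝ × ℝ → ℝ := fun p => p.1 ^ 2 - p.1 * p.2 - p.2 ^ 2
    let Lplus : ℝ × ℝ → ℝ := fun p => p.1 - ((1 + Real.sqrt 5) / 2) * p.2
    let B : ℝ × ℝ → ℝ × ℝ := fun p => (p.1 - p.2, -p.1 + 2 * p.2)
    let I₂ : ℝ × ℝ → ℝ := fun p =>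
      if I₁ p = 0 then 0
      else f (I₁ p) * Real.sin ((2 * Real.pi / Real.log lam) * Real.log |Lplus p|)
    ∀ p : ℝ × ℝ, I₂ (B p) = I₂ p := by
  intro lam f I₁ Lplus B I₂ p
  have hlam : lam = φ ^ 2 := three_add_sqrt_five_div_two
  have hI : I₁ (B p) = I₁ p := by simp only [I₁, B]; ring
  have hL : Lplus (B p) = lam * Lplus p := hlam ▸ sub_sub_goldenRatio_mul p.1 p.2
  have hlog : log lam ≠ 0 := hlam ▸ log_goldenRatio_sq_ne_zero
  simp only [I₂, hI, hL, sin_two_pi_div_log_mul_log_abs_mul hlog]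
end

section
/- In the group G = ℤ² ⋊_A ℤ with A = [[2,1],[1,1]], let a = ((1,0), 0) and c = ((0,0), 1). Then the 2^k words c a^{ε₁} c a^{ε₂} ⋯ c a^{ε_k} with ε_j ∈ {0,1} are pairwise distinct elements of G. -/
/-!
Read from the right, the word `c a^{ε₁} c a^{ε₂} ⋯ c a^{ε_k}` is `(∑ⱼ εⱼ Aʲ(1,0), k)`. The second
coordinates `1, 3, 8, 21, …` of the vectors `Aʲ(1,0)`, `j ≥ 1`, form a superincreasing sequence: each
exceeds the sum of all earlier ones (they stay in the cone `0 ≤ y ≤ x`, on which `A` adds `x` to `y`).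
Hence the subset sum `∑ⱼ εⱼ (Aʲ(1,0))₂` determines `ε`, one letter at a time from the last.
-/

/-- The automorphism of `ℤ²` given by the matrix `A = [[2,1],[1,1]]`. -/
def anosovAut : (ℤ × ℤ) ≃+ (ℤ × ℤ) where
  toFun v := (2 * v.1 + v.2, v.1 + v.2)
  invFun v := (v.1 - v.2, -v.1 + 2 * v.2)
  left_inv := by rintro ⟨x, y⟩; simp only [Prod.mk.injEq]; constructor <;> ring
  right_inv := by rintro ⟨x, y⟩; simp only [Prod.mk.injEq]; constructor <;> ring
  map_add' := by rintro ⟨x, y⟩ ⟨u, v⟩; simp only [Prod.mk_add_mk, Prod.mk.injEq]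
                 constructor <;> ring

/-- The action of `ℤ` on `ℤ²` by powers of `A`. -/
noncomputable def anosovAction :
    Multiplicative ℤ →* MulAut (Multiplicative (ℤ × ℤ)) :=
  zpowersHom _ (AddEquiv.toMultiplicative anosovAut)

/-- The group `G = ℤ² ⋊_A ℤ`. -/
noncomputable abbrev anosovGroup :=
  SemidirectProduct (Multiplicative (ℤ × ℤ)) (Multiplicative ℤ) anosovAction

section SubsetSum

variable {M : Type*}

def subsetSum [AddMonoid M] (w : ℕ → M) (ε : List Bool) : M :=
  (ε.zipIdx.map fun p => if p.1 then w p.2 else 0).sum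

@[simp]
lemma subsetSum_nil [AddMonoid M] (w : ℕ → M) : subsetSum w [] = 0 := rfl

lemma subsetSum_concat [AddMonoid M] (w : ℕ → M) (ε : List Bool) (e : Bool) :
    subsetSum w (ε ++ [e]) = subsetSum w ε + if e then w ε.length else 0 := by
  simp [subsetSum, List.zipIdx_append]

lemma map_subsetSum {N F : Type*} [AddMonoid M] [AddMonoid N] [FunLike F M N]
    [AddMonoidHomClass F M N] (f : F) (w : ℕ → M) (ε : List Bool) :
    f (subsetSum w ε) = subsetSum (f ∘ w) ε := by
  simp only [subsetSum, map_list_sum, List.map_map]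
  congr 1
  refine List.map_congr_left fun ⟨e, i⟩ _ => ?_
  cases e <;> simp

variable [AddCommMonoid M] [LinearOrder M] [IsOrderedCancelAddMonoid M]

def Superincreasing (w : ℕ → M) : Prop :=
  ∀ j, ∑ i ∈ Finset.range j, w i < w j

lemma Superincreasing.nonneg {w : ℕ → M} (hw : Superincreasing w) (j : ℕ) : 0 ≤ w j := by
  induction j using Nat.strong_induction_on with
  | _ j ih => exact (Finset.sum_nonneg fun i hi => ih i (Finset.mem_range.1 hi)).trans (hw j).le

lemma subsetSum_nonneg {w : ℕ → M} (hw : ∀ i, 0 ≤ w i) (ε : List Bool) :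
    0 ≤ subsetSum w ε :=
  List.sum_nonneg <| by simp only [List.mem_map]; rintro _ ⟨⟨e, i⟩, -, rfl⟩; cases e <;> simp [hw]

lemma subsetSum_le_sum_range {w : ℕ → M} (hw : ∀ i, 0 ≤ w i) (ε : List Bool) :
    subsetSum w ε ≤ ∑ i ∈ Finset.range ε.length, w i := by
  induction ε using List.reverseRecOn with
  | nil => simp
  | append_singleton ε e ih =>
    rw [subsetSum_concat, List.length_append, List.length_singleton, Finset.sum_range_succ]
    cases e
    · simpa using ih.trans (le_add_of_nonneg_right (hw _))
    · simpa using ih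

theorem Superincreasing.subsetSum_injective {w : ℕ → M} (hw : Superincreasing w)
    {ε ε' : List Bool} (hl : ε.length = ε'.length) (h : subsetSum w ε = subsetSum w ε') :
    ε = ε' := by
  induction ε using List.reverseRecOn generalizing ε' with
  | nil => simpa [eq_comm] using hl
  | append_singleton δ e ih =>
    obtain ⟨δ', e', rfl⟩ : ∃ δ' e', ε' = δ' ++ [e'] := by
      cases ε' using List.reverseRecOn with
      | nil => simp at hl
      | append_singleton δ' e' => exact ⟨δ', e', rfl⟩
    have hδ : δ.length = δ'.length := by simpa using hl
    rw [subsetSum_concat, subsetSum_concat, ← hδ] at h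
    have key : ∀ {δ δ' : List Bool}, δ.length = δ'.length →
        subsetSum w δ + w δ.length ≠ subsetSum w δ' := by
      intro δ δ' hlen hsum
      have hlt : subsetSum w δ' < w δ.length :=
        hlen ▸ (subsetSum_le_sum_range hw.nonneg δ').trans_lt (hw _)
      exact hlt.not_ge (hsum ▸ le_add_of_nonneg_left (subsetSum_nonneg hw.nonneg δ))
    cases e <;> cases e'
    · simp only [Bool.false_eq_true, ite_false, add_zero] at h; rw [ih hδ h]
    · exact absurd (by simpa [hδ] using h.symm) (key hδ.symm)
    · exact absurd (by simpa using h) (key hδ)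
    · simp only [ite_true] at h; rw [ih hδ (add_right_cancel h)]

end SubsetSum

lemma anosovAction_one_apply (v : ℤ × ℤ) :
    anosovAction (Multiplicative.ofAdd 1) (Multiplicative.ofAdd v) =
      Multiplicative.ofAdd (anosovAut v) := rfl

lemma anosovAction_natCast_apply (n : ℕ) (v : ℤ × ℤ) :
    anosovAction (Multiplicative.ofAdd (n : ℤ)) (Multiplicative.ofAdd v) =
      Multiplicative.ofAdd (anosovAut^[n] v) := by
  induction n generalizing v with
  | zero => rfl
  | succ n ih =>
    rw [Nat.cast_succ, ofAdd_add, map_mul, MulAut.mul_apply, anosovAction_one_apply, ih,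
      Function.iterate_succ_apply]

lemma prod_map_word (ε : List Bool) :
    (ε.map fun e => (⟨1, Multiplicative.ofAdd 1⟩ : anosovGroup) *
        ⟨Multiplicative.ofAdd (1, 0), 1⟩ ^ (if e then 1 else 0)).prod =
      ⟨Multiplicative.ofAdd (subsetSum (fun j => anosovAut^[j + 1] (1, 0)) ε),
        Multiplicative.ofAdd (ε.length : ℤ)⟩ := by
  induction ε using List.reverseRecOn with
  | nil => rfl
  | append_singleton ε e ih =>
    rw [List.map_append, List.prod_append, ih, subsetSum_concat]
    cases e <;> ext <;> simp [anosovAction_one_apply, anosovAction_natCast_apply]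

lemma mapsTo_anosovAut :
    Set.MapsTo anosovAut {v | 0 ≤ v.2 ∧ v.2 ≤ v.1} {v | 0 ≤ v.2 ∧ v.2 ≤ v.1} :=
  fun _ ⟨h0, h1⟩ => ⟨by change 0 ≤ _ + _; omega, by change _ + _ ≤ 2 * _ + _; omega⟩

lemma superincreasing_snd_iterate_anosovAut :
    Superincreasing fun j => (anosovAut^[j + 1] (1, 0)).2 := by
  intro j
  induction j with
  | zero => decide
  | succ j ih =>
    obtain ⟨-, hv⟩ := mapsTo_anosovAut.iterate (j + 1) (show (1, 0) ∈ _ by decide)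
    dsimp only at ih ⊢
    rw [Finset.sum_range_succ, Function.iterate_succ_apply' _ (j + 1)]
    change _ < _ + _
    omega

/-- In `G = ℤ² ⋊_A ℤ`, with `a = ((1,0),0)` and `c = ((0,0),1)`, the words
`c a^{ε₁} c a^{ε₂} ⋯ c a^{ε_k}` with `ε_j ∈ {0,1}` are pairwise distinct. -/
theorem stmt_10 :
    let a : anosovGroup := ⟨Multiplicative.ofAdd (1, 0), 1⟩
    let c : anosovGroup := ⟨1, Multiplicative.ofAdd 1⟩
    ∀ ε ε' : List Bool, ε.length = ε'.length →
      (ε.map fun e => c * a ^ (if e then 1 else 0)).prod =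
        (ε'.map fun e => c * a ^ (if e then 1 else 0)).prod →
      ε = ε' := by
  intro a c ε ε' hl h
  rw [prod_map_word, prod_map_word] at h
  refine superincreasing_snd_iterate_anosovAut.subsetSum_injective hl ?_
  have := congrArg (fun g : anosovGroup => AddMonoidHom.snd ℤ ℤ g.left.toAdd) h
  simp only [toAdd_ofAdd, map_subsetSum] at this
  exact this
end

section
/- The group G = ℤ² ⋊_A ℤ with A = [[2,1],[1,1]] is not virtually abelian: it contains no abelian subgroup of finite index. -/
/-! A subgroup of finite index contains positive powers `tᵏ` of the generator of `ℤ` and `aᵐ`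
of `a = (1, 0) ∈ ℤ²`. These commute only if `Aᵏ` fixes `(m, 0)`. But `A` maps the cone
`{x > 0, y ≥ 0}` into itself and strictly increases `x` there, so no positive power of `A` fixes
a vector of that cone. -/

theorem MulAut.coe_pow {M : Type*} [Mul M] (f : MulAut M) (n : ℕ) : ⇑(f ^ n) = (⇑f)^[n] :=
  hom_coe_pow _ rfl (fun _ _ => rfl) f n

theorem SemidirectProduct.commute_inl_inr_iff {N G : Type*} [Group N] [Group G]
    {φ : G →* MulAut N} {n : N} {g : G} :
    Commute (inl n : N ⋊[φ] G) (inr g) ↔ φ g n = n := by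
  simp [Commute, SemiconjBy, SemidirectProduct.ext_iff, eq_comm]

lemma anosovAction_ofAdd_natCast_apply (k : ℕ) (v : ℤ × ℤ) :
    anosovAction (.ofAdd (k : ℤ)) (.ofAdd v) = .ofAdd (anosovAut^[k] v) := by
  change (AddEquiv.toMultiplicative anosovAut ^ (k : ℤ)) (.ofAdd v) = _
  rw [zpow_natCast, MulAut.coe_pow]
  exact (Function.Semiconj.iterate_right (f := Multiplicative.ofAdd) (ga := anosovAut)
    (gb := AddEquiv.toMultiplicative anosovAut) (fun _ => rfl) k v).symm

lemma fst_lt_fst_anosovAut {v : ℤ × ℤ} (h1 : 0 < v.1) (h2 : 0 ≤ v.2) :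
    v.1 < (anosovAut v).1 ∧ 0 ≤ (anosovAut v).2 := by
  simp only [anosovAut, AddEquiv.coe_mk, Equiv.coe_fn_mk]
  omega

lemma strictMono_fst_anosovAut_iterate {v : ℤ × ℤ} (h1 : 0 < v.1) (h2 : 0 ≤ v.2) :
    StrictMono fun k : ℕ => (anosovAut^[k] v).1 := by
  have cone : ∀ k : ℕ, 0 < (anosovAut^[k] v).1 ∧ 0 ≤ (anosovAut^[k] v).2 := by
    intro k
    induction k with
    | zero => exact ⟨h1, h2⟩
    | succ k ih =>
      rw [Function.iterate_succ_apply']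
      obtain ⟨hlt, hnonneg⟩ := fst_lt_fst_anosovAut ih.1 ih.2
      exact ⟨ih.1.trans hlt, hnonneg⟩
  refine strictMono_nat_of_lt_succ fun k => ?_
  rw [Function.iterate_succ_apply']
  exact (fst_lt_fst_anosovAut (cone k).1 (cone k).2).1

lemma anosovAut_iterate_ne_self {v : ℤ × ℤ} (h1 : 0 < v.1) (h2 : 0 ≤ v.2) {k : ℕ} (hk : 0 < k) :
    anosovAut^[k] v ≠ v := fun hfix =>
  (strictMono_fst_anosovAut_iterate h1 h2 hk).ne' (congrArg Prod.fst hfix)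

/-- `G = ℤ² ⋊_A ℤ` is not virtually abelian: it contains no abelian subgroup
of finite index. -/
theorem stmt_12 :
    ¬ ∃ H : Subgroup anosovGroup, H.FiniteIndex ∧
        ∀ x ∈ H, ∀ y ∈ H, x * y = y * x := by
  rintro ⟨H, hH, hcomm⟩
  obtain ⟨m, hm, -, hmH⟩ := Subgroup.exists_pow_mem_of_index_ne_zero hH.index_ne_zero
    (SemidirectProduct.inl (.ofAdd ((1, 0) : ℤ × ℤ)) : anosovGroup)
  obtain ⟨k, hk, -, hkH⟩ := Subgroup.exists_pow_mem_of_index_ne_zero hH.index_ne_zero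
    (SemidirectProduct.inr (.ofAdd (1 : ℤ)) : anosovGroup)
  have hfix : anosovAction (.ofAdd (k : ℤ)) (.ofAdd ((m : ℤ), 0)) = .ofAdd ((m : ℤ), 0) := by
    rw [← SemidirectProduct.commute_inl_inr_iff]
    have hpow_inl : (SemidirectProduct.inl (.ofAdd ((1, 0) : ℤ × ℤ)) : anosovGroup) ^ m =
        SemidirectProduct.inl (.ofAdd ((m : ℤ), 0)) := by
      rw [← map_pow, ← ofAdd_nsmul, Prod.smul_mk, nsmul_one, smul_zero]
    have hpow_inr : (SemidirectProduct.inr (.ofAdd (1 : ℤ)) : anosovGroup) ^ k =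
        SemidirectProduct.inr (.ofAdd (k : ℤ)) := by
      rw [← map_pow, ← ofAdd_nsmul, nsmul_one]
    rw [← hpow_inl, ← hpow_inr]
    exact hcomm _ hmH _ hkH
  rw [anosovAction_ofAdd_natCast_apply] at hfix
  exact anosovAut_iterate_ne_self (v := ((m : ℤ), 0)) (by simpa using hm) le_rfl hk
    (Multiplicative.ofAdd.injective hfix)
end
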